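/- For C ∈ ℝ let M(C) : T_g → T_g be the linear map with M(C)(𝓘(Ξ)Ξ) = 𝓘(Ξ)Ξ − C·𝟏 and M(C)τ = τ for every other basis vector τ, and let M^H(C) : T_g^H → T_g^H be the linear map with M^H(C)(𝓘(Ξ)Ξ) = 𝓘(Ξ)Ξ − C·𝟏 and M^H(C)τ = τ for every other basis vector τ. Then renormalization commutes with abstract translation: τ_H ∘ M(C) = M^H(C) ∘ τ_H for every C ∈ ℝ. -/

import Mathlib

/-- The basis symbols of the model space `T_g` for gPAM. -/
inductive B8 : Type
  | Xi | IXiXi | X1Xi | X2Xi | One | IXi | X1 | X2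
  deriving DecidableEq

/-- The basis symbols of the extended model space `T_g^H`. -/
inductive B15 : Type
  | Xi | H | IXiXi | IXiH | IHXi | IHH | X1Xi | X1H | X2Xi | X2H
  | One | IXi | IH | X1 | X2
  deriving DecidableEq

/-- The renormalization map `M(C) : T_g → T_g`, in coordinates:
`M(C)(𝓘(Ξ)Ξ) = 𝓘(Ξ)Ξ - C 𝟏` and every other basis vector is fixed. -/
def M8 (C : ℝ) (v : B8 → ℝ) : B8 → ℝ
  | .One => v .One - C * v .IXiXi
  | b => v b

/-- The extended renormalization map `M^H(C) : T_g^H → T_g^H`, in coordinates: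
`M^H(C)(𝓘(Ξ)Ξ) = 𝓘(Ξ)Ξ - C 𝟏` and every other basis vector is fixed. -/
def MH (C : ℝ) (v : B15 → ℝ) : B15 → ℝ
  | .One => v .One - C * v .IXiXi
  | b => v b

/-- The abstract translation map `τ_H : T_g → T_g^H`, in coordinates: the
linear map with `τ_H(Ξ) = Ξ + H`, `τ_H(𝟏) = 𝟏`, `τ_H(X_i) = X_i`,
`τ_H(𝓘(Ξ)) = 𝓘(Ξ) + 𝓘(H)`, `τ_H(X_iΞ) = X_iΞ + X_iH`,
`τ_H(𝓘(Ξ)Ξ) = 𝓘(Ξ)Ξ + 𝓘(Ξ)H + 𝓘(H)Ξ + 𝓘(H)H`. -/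
def tauH (v : B8 → ℝ) : B15 → ℝ
  | .Xi => v .Xi
  | .H => v .Xi
  | .IXiXi => v .IXiXi
  | .IXiH => v .IXiXi
  | .IHXi => v .IXiXi
  | .IHH => v .IXiXi
  | .X1Xi => v .X1Xi
  | .X1H => v .X1Xi
  | .X2Xi => v .X2Xi
  | .X2H => v .X2Xi
  | .One => v .One
  | .IXi => v .IXi
  | .IH => v .IXi
  | .X1 => v .X1
  | .X2 => v .X2

/-- renormalization commutes with abstract translation:
`τ_H ∘ M(C) = M^H(C) ∘ τ_H` for every `C ∈ ℝ`. -/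
theorem stmt_10 (C : ℝ) : tauH ∘ M8 C = MH C ∘ tauH := by
  funext v b
  cases b <;> rfl
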